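/- For any cut-free sequent derivation f of S ∣ Γ ⟶ C, emb_L(focus f) ◦≐ f, i.e., the phase-erasure of the focused form of f is equivalent to f under ◦≐. -/

import Mathlib

set_option linter.unusedVariables false
inductive Fma (V : Type) : Type
  | var : V → Fma V
  | unit : Fma V
  | tens : Fma V → Fma V → Fma V

abbrev Stp (V : Type) := Option (Fma V)

def stpF {V : Type} : Stp V → Fma V
  | none => Fma.unit
  | some A => A

def semF {V : Type} : Fma V → List (Fma V) → Fma V
  | A, [] => A
  | A, B :: Γ => semF (A.tens B) Γ

abbrev sem {V : Type} (S : Stp V) (Γ : List (Fma V)) : Fma V := semF (stpF S) Γ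

theorem semF_append {V : Type} (A : Fma V) (Γ Δ : List (Fma V)) :
    semF A (Γ ++ Δ) = semF (semF A Γ) Δ := by
  induction Γ generalizing A with
  | nil => rfl
  | cons B Γ ih => exact ih _

/-- The cut-free skew monoidal sequent calculus. -/
inductive CF {V : Type} : Stp V → List (Fma V) → Fma V → Type
  | ax : CF (some A) [] A
  | uf : CF (some A) Γ C → CF none (A :: Γ) C
  | Il : CF none Γ C → CF (some Fma.unit) Γ C
  | Ir : CF none [] Fma.unit
  | tl : CF (some A) (B :: Γ) C → CF (some (Fma.tens A B)) Γ C
  | tr : CF S Γ A → CF none Δ B → CF S (Γ ++ Δ) (Fma.tens A B)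

inductive CFEq {V : Type} : {S : Stp V} → {Γ : List (Fma V)} → {C : Fma V} → CF S Γ C → CF S Γ C → Prop
  | refl : CFEq f f
  | symm : CFEq f g → CFEq g f
  | trans : CFEq f g → CFEq g h → CFEq f h
  | ufCong : CFEq f g → CFEq (CF.uf f) (CF.uf g)
  | IlCong : CFEq f g → CFEq (CF.Il f) (CF.Il g)
  | tlCong : CFEq f g → CFEq (CF.tl f) (CF.tl g)
  | trCong : CFEq f f' → CFEq g g' → CFEq (CF.tr f g) (CF.tr f' g')
  | axI : CFEq (CF.ax (A := Fma.unit (V := V))) (CF.Il CF.Ir)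
  | axTens : CFEq (CF.ax (A := Fma.tens A B)) (CF.tl (CF.tr CF.ax (CF.uf CF.ax)))
  | trUf : CFEq (CF.tr (CF.uf f) g) (CF.uf (CF.tr f g))
  | trIl : CFEq (CF.tr (CF.Il f) g) (CF.Il (CF.tr f g))
  | trTl : CFEq (CF.tr (CF.tl f) g) (CF.tl (CF.tr f g))

mutual
inductive FocL {V : Type} : Stp V → List (Fma V) → Fma V → Type
  | uf : FocL (some A) Γ C → FocL none (A :: Γ) C
  | Il : FocL none Γ C → FocL (some Fma.unit) Γ C
  | tl : FocL (some A) (B :: Γ) C → FocL (some (Fma.tens A B)) Γ C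
  | sw : FocR T Γ C → FocL T Γ C

inductive FocR {V : Type} : Stp V → List (Fma V) → Fma V → Type
  | ax : FocR (some (Fma.var X)) [] (Fma.var X)
  | Ir : FocR none [] Fma.unit
  | tr : FocR T Γ A → FocL none Δ B → FocR T (Γ ++ Δ) (Fma.tens A B)
end

mutual
def embL {V : Type} {S : Stp V} {Γ : List (Fma V)} {C : Fma V} : FocL S Γ C → CF S Γ C
  | .uf f => .uf (embL f)
  | .Il f => .Il (embL f)
  | .tl f => .tl (embL f)
  | .sw f => embR f

def embR {V : Type} {S : Stp V} {Γ : List (Fma V)} {C : Fma V} : FocR S Γ C → CF S Γ C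
  | .ax => .ax
  | .Ir => .Ir
  | .tr f g => .tr (embR f) (embL g)
end

def trL {V : Type} {S : Stp V} {Γ Δ : List (Fma V)} {A B : Fma V} :
    FocL S Γ A → FocL none Δ B → FocL S (Γ ++ Δ) (Fma.tens A B)
  | .uf f, g => .uf (trL f g)
  | .Il f, g => .Il (trL f g)
  | .tl f, g => .tl (trL f g)
  | .sw f, g => .sw (.tr f g)

def axL {V : Type} : (A : Fma V) → FocL (some A) [] A
  | .var X => .sw .ax
  | .unit => .Il (.sw .Ir)
  | .tens A B => .tl (trL (axL A) (.uf (axL B)))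

def focus {V : Type} {S : Stp V} {Γ : List (Fma V)} {C : Fma V} : CF S Γ C → FocL S Γ C
  | .ax => axL _
  | .uf f => .uf (focus f)
  | .Il f => .Il (focus f)
  | .Ir => .sw .Ir
  | .tl f => .tl (focus f)
  | .tr f g => trL (focus f) (focus g)

/-!
`focus` is structural except at `ax` and `⊗R`. The focused `⊗R`, `trL`, permutes `⊗R` above
every left rule of its first premise, which `◦≐` undoes with `trUf`, `trIl`, `trTl`; the focused
axiom `axL` is the η-expansion of `ax`, which `◦≐` undoes with `axI` and `axTens`.
-/

section

variable {V : Type}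

theorem embL_trL {S : Stp V} {Γ Δ : List (Fma V)} {A B : Fma V}
    (f : FocL S Γ A) (g : FocL none Δ B) :
    CFEq (embL (trL f g)) (CF.tr (embL f) (embL g)) :=
  match f with
  | .uf f => (CFEq.ufCong (embL_trL f g)).trans CFEq.trUf.symm
  | .Il f => (CFEq.IlCong (embL_trL f g)).trans CFEq.trIl.symm
  | .tl f => (CFEq.tlCong (embL_trL f g)).trans CFEq.trTl.symm
  | .sw _ => CFEq.refl

theorem embL_axL (A : Fma V) : CFEq (embL (axL A)) CF.ax := by
  induction A with
  | var _ => exact CFEq.refl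
  | unit => exact CFEq.axI.symm
  | tens A B ihA ihB =>
    refine (CFEq.tlCong ?_).trans CFEq.axTens.symm
    exact (embL_trL _ _).trans (CFEq.trCong ihA (CFEq.ufCong ihB))

end

/-- The phase-erasure of the focused form of a cut-free derivation `f` is `◦≐`-equivalent
to `f`. -/
theorem statement17 (V : Type) (S : Stp V) (Γ : List (Fma V)) (C : Fma V)
    (f : CF S Γ C) : CFEq (embL (focus f)) f := by
  induction f with
  | ax => exact embL_axL _
  | uf _ ih => exact CFEq.ufCong ih
  | Il _ ih => exact CFEq.IlCong ih
  | Ir => exact CFEq.refl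
  | tl _ ih => exact CFEq.tlCong ih
  | tr _ _ ihf ihg => exact (embL_trL _ _).trans (CFEq.trCong ihf ihg)
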